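/- arXiv:0802.2131 — 4 statements merged into one kernel-verified Lean document; each statement's English description precedes it below -/
import Mathlib

section
/- If f : ℝ³ → ℝ is continuously differentiable and satisfies y ∂f/∂x - x ∂f/∂y + κ ∂f/∂z = 0 everywhere, then f is helical, i.e. f(S_ρ x) = f(x) for all ρ ∈ ℝ and all x ∈ ℝ³. -/
/-- The screw motion `S_ρ` with pitch parameter `κ`. -/
noncomputable def screw (κ ρ : ℝ) (p : ℝ × ℝ × ℝ) : ℝ × ℝ × ℝ :=
  (p.1 * Real.cos ρ + p.2.1 * Real.sin ρ,
   -p.1 * Real.sin ρ + p.2.1 * Real.cos ρ,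
   p.2.2 + κ * ρ)

lemma fderiv_decomp (f : ℝ × ℝ × ℝ → ℝ) (q : ℝ × ℝ × ℝ) (a b c : ℝ) :
    fderiv ℝ f q (a, b, c) = a * fderiv ℝ f q (1, 0, 0) + b * fderiv ℝ f q (0, 1, 0)
      + c * fderiv ℝ f q (0, 0, 1) := by
  have : (a, b, c) = a • ((1:ℝ), (0:ℝ), (0:ℝ)) + b • ((0:ℝ), (1:ℝ), (0:ℝ))
      + c • ((0:ℝ), (0:ℝ), (1:ℝ)) := by
    simp [Prod.ext_iff]
  rw [this, map_add, map_add, map_smul, map_smul, map_smul]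
  simp [smul_eq_mul]

/-- A C¹ function satisfying `y ∂f/∂x - x ∂f/∂y + κ ∂f/∂z = 0` everywhere is
    invariant under all screw motions, i.e. is helical. -/
theorem dxi_zero_implies_helical (κ : ℝ) (hκ : κ ≠ 0) (f : ℝ × ℝ × ℝ → ℝ)
    (hf : ContDiff ℝ 1 f)
    (hdxi : ∀ p : ℝ × ℝ × ℝ,
      p.2.1 * fderiv ℝ f p (1, 0, 0) - p.1 * fderiv ℝ f p (0, 1, 0)
        + κ * fderiv ℝ f p (0, 0, 1) = 0) :
    ∀ (ρ : ℝ) (p : ℝ × ℝ × ℝ), f (screw κ ρ p) = f p := by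
  intro ρ p
  set c : ℝ → ℝ × ℝ × ℝ := fun ρ => screw κ ρ p with hc
  have hcd : ∀ r : ℝ, HasDerivAt c ((c r).2.1, -(c r).1, κ) r := by
    intro r
    have h1 : HasDerivAt (fun ρ : ℝ => p.1 * Real.cos ρ + p.2.1 * Real.sin ρ)
        (p.1 * (-Real.sin r) + p.2.1 * Real.cos r) r :=
      (((Real.hasDerivAt_cos r).const_mul p.1).add ((Real.hasDerivAt_sin r).const_mul p.2.1))
    have h2 : HasDerivAt (fun ρ : ℝ => -p.1 * Real.sin ρ + p.2.1 * Real.cos ρ)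
        (-p.1 * Real.cos r + p.2.1 * (-Real.sin r)) r :=
      (((Real.hasDerivAt_sin r).const_mul (-p.1)).add ((Real.hasDerivAt_cos r).const_mul p.2.1))
    have h3 : HasDerivAt (fun ρ : ℝ => p.2.2 + κ * ρ) κ r := by
      simpa using ((hasDerivAt_id r).const_mul κ).const_add p.2.2
    have := h1.prodMk (h2.prodMk h3)
    convert this using 2 <;> simp [hc, screw] <;> ring
  have hg : ∀ r : ℝ, HasDerivAt (fun ρ => f (c ρ)) 0 r := by
    intro r
    have hfd : HasFDerivAt f (fderiv ℝ f (c r)) (c r) :=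
      (hf.differentiable one_ne_zero (c r)).hasFDerivAt
    have := hfd.comp_hasDerivAt r (hcd r)
    have hval : fderiv ℝ f (c r) ((c r).2.1, -(c r).1, κ) = 0 := by
      rw [fderiv_decomp]
      have := hdxi (c r)
      linarith
    rwa [hval] at this
  have : (fun ρ => f (c ρ)) ρ = (fun ρ => f (c ρ)) 0 :=
    is_const_of_deriv_eq_zero (fun r => (hg r).differentiableAt)
      (fun r => (hg r).deriv) ρ 0
  simpa [hc, screw] using this
end

section
/- A continuously differentiable vector field v = (v_x, v_y, v_z) : ℝ³ → ℝ³ satisfies v(S_ρ x) = R_ρ v(x) for all ρ (where R_ρ is rotation about the z-axis by angle ρ) if and only if the directional derivatives along ξ = (y, -x, κ) satisfy ∂v_x/∂ξ = v_y, ∂v_y/∂ξ = -v_x, ∂v_z/∂ξ = 0, where ∂f/∂ξ = y ∂f/∂x - x ∂f/∂y + κ ∂f/∂z. -/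
/-- Rotation about the z-axis by angle `ρ`. -/
noncomputable def rotZ (ρ : ℝ) (w : ℝ × ℝ × ℝ) : ℝ × ℝ × ℝ :=
  (w.1 * Real.cos ρ + w.2.1 * Real.sin ρ,
   -w.1 * Real.sin ρ + w.2.1 * Real.cos ρ,
   w.2.2)

/-- Directional derivative along `ξ = (y, -x, κ)`:
    `∂f/∂ξ = y ∂f/∂x - x ∂f/∂y + κ ∂f/∂z`. -/
noncomputable def dxi (κ : ℝ) (f : ℝ × ℝ × ℝ → ℝ) (p : ℝ × ℝ × ℝ) : ℝ :=
  p.2.1 * fderiv ℝ f p (1, 0, 0) - p.1 * fderiv ℝ f p (0, 1, 0)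
    + κ * fderiv ℝ f p (0, 0, 1)

lemma dxi_eq (κ : ℝ) (f : ℝ × ℝ × ℝ → ℝ) (p : ℝ × ℝ × ℝ) :
    dxi κ f p = fderiv ℝ f p (p.2.1, -p.1, κ) := by
  have h : ((p.2.1, -p.1, κ) : ℝ × ℝ × ℝ)
      = p.2.1 • ((1:ℝ), (0:ℝ), (0:ℝ)) + (-p.1) • ((0:ℝ), (1:ℝ), (0:ℝ))
        + κ • ((0:ℝ), (0:ℝ), (1:ℝ)) := by
    simp [Prod.ext_iff]
  rw [h, map_add, map_add, map_smul, map_smul, map_smul, dxi]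
  simp only [smul_eq_mul]
  ring

lemma screw_zero (κ : ℝ) (p : ℝ × ℝ × ℝ) : screw κ 0 p = p := by
  simp [screw]

lemma screw_hasDerivAt (κ : ℝ) (p : ℝ × ℝ × ℝ) (ρ : ℝ) :
    HasDerivAt (fun t => screw κ t p)
      ((screw κ ρ p).2.1, -(screw κ ρ p).1, κ) ρ := by
  have h1 : HasDerivAt (fun t => p.1 * Real.cos t + p.2.1 * Real.sin t)
      ((screw κ ρ p).2.1) ρ := by
    have := ((Real.hasDerivAt_cos ρ).const_mul p.1).add
      ((Real.hasDerivAt_sin ρ).const_mul p.2.1)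
    refine this.congr_deriv ?_
    simp only [screw]; ring
  have h2 : HasDerivAt (fun t => -p.1 * Real.sin t + p.2.1 * Real.cos t)
      (-(screw κ ρ p).1) ρ := by
    have := ((Real.hasDerivAt_sin ρ).const_mul (-p.1)).add
      ((Real.hasDerivAt_cos ρ).const_mul p.2.1)
    refine this.congr_deriv ?_
    simp only [screw]; ring
  have h3 : HasDerivAt (fun t => p.2.2 + κ * t) κ ρ := by
    have := (hasDerivAt_id ρ).const_mul κ
    simpa using (this.const_add p.2.2)
  exact h1.prodMk (h2.prodMk h3)

/-- A C¹ vector field is helical (`v ∘ S_ρ = R_ρ ∘ v`) iff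
    `∂v_x/∂ξ = v_y`, `∂v_y/∂ξ = -v_x`, `∂v_z/∂ξ = 0`. -/
theorem helical_vector_iff (κ : ℝ) (hκ : κ ≠ 0) (v : ℝ × ℝ × ℝ → ℝ × ℝ × ℝ)
    (hv : ContDiff ℝ 1 v) :
    (∀ (ρ : ℝ) (p : ℝ × ℝ × ℝ), v (screw κ ρ p) = rotZ ρ (v p)) ↔
      (∀ p : ℝ × ℝ × ℝ,
        dxi κ (fun q => (v q).1) p = (v p).2.1 ∧
        dxi κ (fun q => (v q).2.1) p = -(v p).1 ∧
        dxi κ (fun q => (v q).2.2) p = 0) := by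
  have hvd : Differentiable ℝ v := hv.differentiable one_ne_zero
  have h1 : Differentiable ℝ (fun q => (v q).1) := fun q => (hvd q).fst
  have h2 : Differentiable ℝ (fun q => (v q).2.1) := fun q => (hvd q).snd.fst
  have h3 : Differentiable ℝ (fun q => (v q).2.2) := fun q => (hvd q).snd.snd
  have key : ∀ (f : ℝ × ℝ × ℝ → ℝ), Differentiable ℝ f → ∀ (p : ℝ × ℝ × ℝ) (ρ : ℝ),
      HasDerivAt (fun t => f (screw κ t p)) (dxi κ f (screw κ ρ p)) ρ := by
    intro f hf p ρ
    have hc := screw_hasDerivAt κ p ρ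
    have := (hf (screw κ ρ p)).hasFDerivAt.comp_hasDerivAt ρ hc
    rw [dxi_eq]
    exact this
  constructor
  · intro H p
    have e1 : (fun t => (v (screw κ t p)).1)
        = fun t => (v p).1 * Real.cos t + (v p).2.1 * Real.sin t :=
      funext fun t => by rw [H t p]; rfl
    have e2 : (fun t => (v (screw κ t p)).2.1)
        = fun t => -(v p).1 * Real.sin t + (v p).2.1 * Real.cos t :=
      funext fun t => by rw [H t p]; rfl
    have e3 : (fun t => (v (screw κ t p)).2.2) = fun _ => (v p).2.2 :=
      funext fun t => by rw [H t p]; rfl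
    have d1 := key (fun q => (v q).1) h1 p 0
    have d2 := key (fun q => (v q).2.1) h2 p 0
    have d3 := key (fun q => (v q).2.2) h3 p 0
    rw [screw_zero] at d1 d2 d3
    rw [show (fun t => (fun q => (v q).1) (screw κ t p)) = _ from e1] at d1
    rw [show (fun t => (fun q => (v q).2.1) (screw κ t p)) = _ from e2] at d2
    rw [show (fun t => (fun q => (v q).2.2) (screw κ t p)) = _ from e3] at d3
    have d1' : HasDerivAt (fun t => (v p).1 * Real.cos t + (v p).2.1 * Real.sin t)
        ((v p).2.1) 0 := by
      have := ((Real.hasDerivAt_cos 0).const_mul (v p).1).add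
        ((Real.hasDerivAt_sin 0).const_mul (v p).2.1)
      exact this.congr_deriv (by simp)
    have d2' : HasDerivAt (fun t => -(v p).1 * Real.sin t + (v p).2.1 * Real.cos t)
        (-(v p).1) 0 := by
      have := ((Real.hasDerivAt_sin 0).const_mul (-(v p).1)).add
        ((Real.hasDerivAt_cos 0).const_mul (v p).2.1)
      exact this.congr_deriv (by simp)
    have d3' : HasDerivAt (fun _ : ℝ => (v p).2.2) 0 0 := hasDerivAt_const _ _
    exact ⟨d1.unique d1', d2.unique d2', d3.unique d3'⟩
  · intro H ρ p
    have dw1 : ∀ t, HasDerivAt (fun s => (v (screw κ s p)).1)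
        ((v (screw κ t p)).2.1) t := by
      intro t
      have := key (fun q => (v q).1) h1 p t
      rwa [(H (screw κ t p)).1] at this
    have dw2 : ∀ t, HasDerivAt (fun s => (v (screw κ s p)).2.1)
        (-(v (screw κ t p)).1) t := by
      intro t
      have := key (fun q => (v q).2.1) h2 p t
      rwa [(H (screw κ t p)).2.1] at this
    have dw3 : ∀ t, HasDerivAt (fun s => (v (screw κ s p)).2.2) 0 t := by
      intro t
      have := key (fun q => (v q).2.2) h3 p t
      rwa [(H (screw κ t p)).2.2] at this
    -- g1, g2 are the components of rotZ (-t) applied to v (screw κ t p)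
    have hg1 : ∀ t, HasDerivAt
        (fun s => (v (screw κ s p)).1 * Real.cos s - (v (screw κ s p)).2.1 * Real.sin s)
        0 t := by
      intro t
      have := ((dw1 t).mul (Real.hasDerivAt_cos t)).sub
        ((dw2 t).mul (Real.hasDerivAt_sin t))
      refine this.congr_deriv ?_
      ring
    have hg2 : ∀ t, HasDerivAt
        (fun s => (v (screw κ s p)).1 * Real.sin s + (v (screw κ s p)).2.1 * Real.cos s)
        0 t := by
      intro t
      have := ((dw1 t).mul (Real.hasDerivAt_sin t)).add
        ((dw2 t).mul (Real.hasDerivAt_cos t))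
      refine this.congr_deriv ?_
      ring
    have const : ∀ (g : ℝ → ℝ), (∀ t, HasDerivAt g 0 t) → ∀ t, g t = g 0 := by
      intro g hg t
      exact is_const_of_deriv_eq_zero (fun s => (hg s).differentiableAt)
        (fun s => (hg s).deriv) t 0
    have e1 := const _ hg1 ρ
    have e2 := const _ hg2 ρ
    have e3 := const _ dw3 ρ
    rw [screw_zero] at e1 e2 e3
    simp only [Real.cos_zero, Real.sin_zero, mul_one, mul_zero, sub_zero, add_zero,
      zero_add] at e1 e2 e3
    have pyth := Real.sin_sq_add_cos_sq ρ
    refine Prod.ext ?_ (Prod.ext ?_ ?_)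
    · show (v (screw κ ρ p)).1 = (v p).1 * Real.cos ρ + (v p).2.1 * Real.sin ρ
      linear_combination Real.cos ρ * e1 + Real.sin ρ * e2
        - (v (screw κ ρ p)).1 * pyth
    · show (v (screw κ ρ p)).2.1 = -(v p).1 * Real.sin ρ + (v p).2.1 * Real.cos ρ
      linear_combination (-Real.sin ρ) * e1 + Real.cos ρ * e2
        - (v (screw κ ρ p)).2.1 * pyth
    · exact e3
end

section
/- Let ψ, ω be C² functions on ℝ² and u = (u_x, u_y) defined from ψ by the helical stream-function relation (u_x, u_y)ᵀ = (1/(κ²+x²+y²)) [[xy, -(κ²+x²)],[κ²+y², -xy]] ∇ψ, with u_z = (1/κ)(x u_y - y u_x) and the helical relation κ ∂ω/∂z = -y ∂ω/∂x + x ∂ω/∂y. Then the 3D advection term reduces to a 2D Jacobian: u_x ∂ω/∂x + u_y ∂ω/∂y + u_z ∂ω/∂z = -∂ψ/∂y ∂ω/∂x + ∂ψ/∂x ∂ω/∂y. -/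
noncomputable def p2x (f : ℝ × ℝ → ℝ) (p : ℝ × ℝ) : ℝ := fderiv ℝ f p (1, 0)
noncomputable def p2y (f : ℝ × ℝ → ℝ) (p : ℝ × ℝ) : ℝ := fderiv ℝ f p (0, 1)

noncomputable def pdx (f : ℝ × ℝ × ℝ → ℝ) (p : ℝ × ℝ × ℝ) : ℝ := fderiv ℝ f p (1, 0, 0)
noncomputable def pdy (f : ℝ × ℝ × ℝ → ℝ) (p : ℝ × ℝ × ℝ) : ℝ := fderiv ℝ f p (0, 1, 0)
noncomputable def pdz (f : ℝ × ℝ × ℝ → ℝ) (p : ℝ × ℝ × ℝ) : ℝ := fderiv ℝ f p (0, 0, 1)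

/-- Velocity components recovered from the helical stream function. -/
noncomputable def uxOf (κ : ℝ) (ψ : ℝ × ℝ → ℝ) (p : ℝ × ℝ) : ℝ :=
  (p.1 * p.2 * p2x ψ p - (κ ^ 2 + p.1 ^ 2) * p2y ψ p) / (κ ^ 2 + p.1 ^ 2 + p.2 ^ 2)

noncomputable def uyOf (κ : ℝ) (ψ : ℝ × ℝ → ℝ) (p : ℝ × ℝ) : ℝ :=
  ((κ ^ 2 + p.2 ^ 2) * p2x ψ p - p.1 * p.2 * p2y ψ p) / (κ ^ 2 + p.1 ^ 2 + p.2 ^ 2)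

/-- The vertical velocity recovered from orthogonality: `u_z = (x u_y - y u_x)/κ`. -/
noncomputable def uzOf (κ : ℝ) (ψ : ℝ × ℝ → ℝ) (p : ℝ × ℝ) : ℝ :=
  (p.1 * uyOf κ ψ p - p.2 * uxOf κ ψ p) / κ

/-- For `u` defined from the stream function `ψ` (with `u_z = (x u_y - y u_x)/κ`)
    and a helical scalar `ω` (satisfying `κ ∂ω/∂z = -y ∂ω/∂x + x ∂ω/∂y`), the 3D
    advection term reduces to the 2D Jacobian:
    `u·∇ω = -ψ_y ω_x + ψ_x ω_y`. -/
theorem advection_reduces_to_jacobian (κ : ℝ) (hκ : κ ≠ 0)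
    (ψ : ℝ × ℝ → ℝ) (ω : ℝ × ℝ × ℝ → ℝ)
    (hψ : ContDiff ℝ 2 ψ) (hω : ContDiff ℝ 2 ω)
    (hhelω : ∀ p : ℝ × ℝ × ℝ, κ * pdz ω p = -p.2.1 * pdx ω p + p.1 * pdy ω p) :
    ∀ p : ℝ × ℝ × ℝ,
      uxOf κ ψ (p.1, p.2.1) * pdx ω p + uyOf κ ψ (p.1, p.2.1) * pdy ω p
          + uzOf κ ψ (p.1, p.2.1) * pdz ω p
        = -(p2y ψ (p.1, p.2.1)) * pdx ω p + p2x ψ (p.1, p.2.1) * pdy ω p := by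
  rintro ⟨x, y, z⟩
  have h := hhelω (x, y, z)
  have hz : pdz ω (x, y, z) = (-y * pdx ω (x, y, z) + x * pdy ω (x, y, z)) / κ := by
    field_simp [mul_comm] at h ⊢; linarith
  have hd : κ ^ 2 + x ^ 2 + y ^ 2 ≠ 0 := by positivity
  simp only [uxOf, uyOf, uzOf, hz]
  field_simp
  ring
end

section
/- Let z : [0,T] → [0,∞) be absolutely continuous with z(0) = 0, and suppose for every ε ∈ (0,1) it satisfies z z' ≤ (C/ε) M^ε z^{2-ε} a.e., with constants C, M > 0. Then z(t) = 0 for all t ∈ [0,T]. -/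
open MeasureTheory intervalIntegral

open Set Filter

lemma yudovich_comp (T C M : ℝ) (hC : 0 < C) (hM : 0 < M)
    (z z' : ℝ → ℝ)
    (hnn : ∀ t ∈ Set.Icc 0 T, 0 ≤ z t)
    (hint : IntegrableOn z' (Set.Icc 0 T))
    (hac : ∀ t ∈ Set.Icc 0 T, z t = z 0 + ∫ s in (0 : ℝ)..t, z' s)
    (hineq : ∀ ε ∈ Set.Ioo (0 : ℝ) 1,
      ∀ᵐ t ∂(volume.restrict (Set.Icc 0 T)),
        z t * z' t ≤ (C / ε) * M ^ ε * (z t) ^ ((2 : ℝ) - ε))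
    (a : ℝ) (ha : a ∈ Set.Icc 0 T) (hza : z a = 0)
    (ε : ℝ) (hε : ε ∈ Set.Ioo (0:ℝ) 1) (δ : ℝ) (hδ : 0 < δ) :
    ∀ t ∈ Set.Icc a T, z t < M * (2*C*(t-a)+δ) ^ (1/ε) := by
  obtain ⟨hε0, hε1⟩ := hε
  obtain ⟨ha0, haT⟩ := ha
  have h0T : (0:ℝ) ≤ T := le_trans ha0 haT
  set v : ℝ → ℝ := fun t => M * (2*C*(t-a)+δ) ^ (1/ε) with hv_def
  -- continuity of z on [0,T]
  have hcont : ContinuousOn z (Set.Icc 0 T) := by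
    have h1 : ContinuousOn (fun t => z 0 + ∫ s in (0:ℝ)..t, z' s) (Set.Icc 0 T) := by
      apply continuousOn_const.add
      have := intervalIntegral.continuousOn_primitive_interval
        (a := (0:ℝ)) (b := T) (μ := volume) (f := z') (by rwa [Set.uIcc_of_le h0T])
      rwa [Set.uIcc_of_le h0T] at this
    exact ContinuousOn.congr h1 (fun t ht => hac t ht)
  have hbase : ∀ t, a ≤ t → 0 < 2*C*(t-a)+δ := by
    intro t h; nlinarith
  have hvcont : Continuous v := by
    apply continuous_const.mul
    apply Continuous.rpow_const
    · exact ((continuous_const.mul (continuous_id.sub continuous_const)).add continuous_const)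
    · intro x; right; positivity
  have hvpos : ∀ t, a ≤ t → 0 < v t := fun t h =>
    mul_pos hM (Real.rpow_pos_of_pos (hbase t h) _)
  by_contra hcon
  push_neg at hcon
  obtain ⟨t₁, ht₁, hle₁⟩ := hcon
  -- first crossing point
  set B : Set ℝ := {t ∈ Set.Icc a T | v t ≤ z t} with hB_def
  have hBcompact : IsCompact B := by
    apply IsCompact.of_isClosed_subset isCompact_Icc _ (fun x hx => hx.1)
    have : B = Set.Icc a T ∩ (fun t => z t - v t) ⁻¹' Set.Ici 0 := by
      ext x; simp [hB_def, sub_nonneg, Set.mem_Ici]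
    rw [this]
    exact ContinuousOn.preimage_isClosed_of_isClosed
      ((hcont.mono (Set.Icc_subset_Icc ha0 le_rfl)).sub hvcont.continuousOn)
      isClosed_Icc isClosed_Ici
  obtain ⟨t₀, ht₀B, ht₀least⟩ := hBcompact.exists_isLeast ⟨t₁, ht₁, hle₁⟩
  obtain ⟨⟨hat₀le, ht₀T⟩, hvz⟩ := ht₀B
  have hat₀ : a < t₀ := by
    rcases lt_or_eq_of_le hat₀le with h | h
    · exact h
    · exfalso; rw [← h] at hvz; rw [hza] at hvz
      exact absurd hvz (not_le.2 (hvpos a le_rfl))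
  have hlt : ∀ u ∈ Set.Ico a t₀, z u < v u := by
    intro u hu
    obtain ⟨hu1, hu2⟩ := hu
    by_contra h
    push_neg at h
    exact absurd (ht₀least ⟨⟨hu1, le_trans hu2.le ht₀T⟩, h⟩) (not_le.2 hu2)
  have hzt₀ : z t₀ ≤ v t₀ := by
    have hcw : ContinuousWithinAt (fun u => v u - z u) (Set.Icc a t₀) t₀ :=
      (hvcont.continuousOn.sub
        (hcont.mono (Set.Icc_subset_Icc ha0 ht₀T))).continuousWithinAt
        (Set.right_mem_Icc.2 hat₀le)
    have hne : (nhdsWithin t₀ (Set.Ico a t₀)).NeBot := by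
      rw [← mem_closure_iff_nhdsWithin_neBot, closure_Ico hat₀.ne]
      exact Set.right_mem_Icc.2 hat₀le
    have htend : Tendsto (fun u => v u - z u) (nhdsWithin t₀ (Set.Ico a t₀))
        (nhds (v t₀ - z t₀)) :=
      hcw.tendsto.mono_left (nhdsWithin_mono _ Set.Ico_subset_Icc_self)
    have h0le : (0:ℝ) ≤ v t₀ - z t₀ :=
      ge_of_tendsto htend (eventually_nhdsWithin_of_forall
        (fun u hu => sub_nonneg.2 (hlt u hu).le))
    linarith
  have heq : z t₀ = v t₀ := le_antisymm hzt₀ hvz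
  -- the last point s before t₀ where z dips to p or below
  set p : ℝ := v t₀ / 2 with hp_def
  have hp : 0 < p := half_pos (hvpos t₀ hat₀le)
  set K : Set ℝ := {u ∈ Set.Icc a t₀ | z u ≤ p} with hK_def
  have hKcompact : IsCompact K := by
    apply IsCompact.of_isClosed_subset isCompact_Icc _ (fun x hx => hx.1)
    have : K = Set.Icc a t₀ ∩ z ⁻¹' Set.Iic p := by
      ext x; simp [hK_def]
    rw [this]
    exact ContinuousOn.preimage_isClosed_of_isClosed
      (hcont.mono (Set.Icc_subset_Icc ha0 ht₀T)) isClosed_Icc isClosed_Iic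
  have hKne : K.Nonempty := ⟨a, Set.left_mem_Icc.2 hat₀le, by rw [hza]; exact hp.le⟩
  obtain ⟨s, hsK, hsgreat⟩ := hKcompact.exists_isGreatest hKne
  obtain ⟨⟨has, hst₀le⟩, hzs⟩ := hsK
  have hst₀ : s < t₀ := by
    rcases lt_or_eq_of_le hst₀le with h | h
    · exact h
    · exfalso
      rw [h] at hzs
      rw [heq] at hzs
      rw [hp_def] at hzs
      linarith [hvpos t₀ hat₀le]
  have hzpos : ∀ u ∈ Set.Ioc s t₀, p < z u := by
    intro u hu
    by_contra h
    push_neg at h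
    exact absurd (hsgreat ⟨⟨le_trans has hu.1.le, hu.2⟩, h⟩) (not_le.2 hu.1)
  -- constants and subsets
  set c₁ : ℝ := C / ε * M ^ ε with hc₁_def
  have hc₁ : 0 < c₁ := mul_pos (div_pos hC hε0) (Real.rpow_pos_of_pos hM _)
  have hsub : Set.Icc s t₀ ⊆ Set.Icc 0 T :=
    Set.Icc_subset_Icc (le_trans ha0 has) ht₀T
  -- integrability facts
  have hz'i : IntervalIntegrable z' volume s t₀ := by
    rw [intervalIntegrable_iff_integrableOn_Icc_of_le hst₀.le]
    exact hint.mono_set hsub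
  set g : ℝ → ℝ := fun u => c₁ * z u ^ ((1:ℝ)-ε) with hg_def
  have hgcont : ContinuousOn g (Set.Icc s t₀) :=
    continuousOn_const.mul ((hcont.mono hsub).rpow_const
      (fun x _ => Or.inr (by linarith)))
  have hgi : IntervalIntegrable g volume s t₀ := by
    apply ContinuousOn.intervalIntegrable
    rwa [Set.uIcc_of_le hst₀.le]
  set w : ℝ → ℝ := fun u => c₁ * v u ^ ((1:ℝ)-ε) with hw_def
  have hwcont : Continuous w :=
    continuous_const.mul (hvcont.rpow_const (fun x => Or.inr (by linarith)))
  have hwi : IntervalIntegrable w volume s t₀ := hwcont.intervalIntegrable s t₀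
  -- a.e. differential inequality after dividing by z > 0
  have key : ∀ᵐ u ∂(volume.restrict (Set.Icc s t₀)), z' u ≤ g u := by
    have hres : volume.restrict (Set.Icc s t₀) = volume.restrict (Set.Ioc s t₀) :=
      (Measure.restrict_congr_set Ioc_ae_eq_Icc).symm
    rw [hres]
    have h1 : ∀ᵐ u ∂(volume.restrict (Set.Ioc s t₀)),
        z u * z' u ≤ c₁ * z u ^ ((2:ℝ) - ε) :=
      ae_restrict_of_ae_restrict_of_subset
        (Set.Ioc_subset_Icc_self.trans hsub) (hineq ε ⟨hε0, hε1⟩)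
    filter_upwards [h1, ae_restrict_mem measurableSet_Ioc] with u hu hmem
    have hzu : 0 < z u := hp.trans (hzpos u hmem)
    have h2 : (z u) ^ ((2:ℝ)-ε) = z u * z u ^ ((1:ℝ)-ε) := by
      have h3 : (2:ℝ)-ε = 1 + (1-ε) := by ring
      rw [h3, Real.rpow_add hzu, Real.rpow_one]
    rw [h2] at hu
    have hu' : z u * z' u ≤ z u * (c₁ * z u ^ ((1:ℝ)-ε)) := by
      calc z u * z' u ≤ c₁ * (z u * z u ^ ((1:ℝ)-ε)) := hu
        _ = z u * (c₁ * z u ^ ((1:ℝ)-ε)) := by ring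
    exact (mul_le_mul_iff_right₀ hzu).mp hu'
  -- the chain of integral inequalities
  have ineq1 : (∫ u in s..t₀, z' u) ≤ ∫ u in s..t₀, g u :=
    intervalIntegral.integral_mono_ae_restrict hst₀.le hz'i hgi key
  have hzlev : ∀ x ∈ Set.Icc s t₀, z x ≤ v x := by
    intro x hx
    rcases lt_or_eq_of_le hx.2 with h | h
    · exact (hlt x ⟨le_trans has hx.1, h⟩).le
    · rw [h, heq]
  have ineq2 : (∫ u in s..t₀, g u) ≤ ∫ u in s..t₀, w u := by
    apply intervalIntegral.integral_mono_on hst₀.le hgi hwi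
    intro x hx
    exact mul_le_mul_of_nonneg_left
      (Real.rpow_le_rpow (hnn x (hsub hx)) (hzlev x hx) (by linarith)) hc₁.le
  -- FTC for the supersolution v
  have hderiv : ∀ x ∈ Set.uIcc s t₀, HasDerivAt v (2 * w x) x := by
    intro x hx
    rw [Set.uIcc_of_le hst₀.le] at hx
    have hax : a ≤ x := le_trans has hx.1
    have hb : 0 < 2*C*(x-a)+δ := hbase x hax
    have h1 : HasDerivAt (fun t => 2*C*(t-a)+δ) (2*C) x := by
      simpa using (((hasDerivAt_id x).sub_const a).const_mul (2*C)).add_const δ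
    have h2 := (h1.rpow_const (p := 1/ε) (Or.inl hb.ne')).const_mul M
    convert h2 using 1
    show 2 * (c₁ * (M * (2*C*(x-a)+δ) ^ (1/ε)) ^ ((1:ℝ)-ε)) = _
    rw [Real.mul_rpow hM.le (Real.rpow_nonneg hb.le _), ← Real.rpow_mul hb.le]
    have hexp : (1/ε)*(1-ε) = 1/ε - 1 := by field_simp
    rw [hexp]
    have hMε : M ^ ε * M ^ ((1:ℝ)-ε) = M := by
      rw [← Real.rpow_add hM]; norm_num
    rw [hc₁_def]
    linear_combination (2*C/ε * (2*C*(x-a)+δ) ^ (1/ε - 1)) * hMε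
    rfl
    rfl
  have hweq : (∫ x in s..t₀, 2 * w x) = v t₀ - v s :=
    intervalIntegral.integral_eq_sub_of_hasDerivAt hderiv
      ((continuous_const.mul hwcont).intervalIntegrable s t₀)
  have hwposint : 0 < ∫ x in s..t₀, w x := by
    apply intervalIntegral.intervalIntegral_pos_of_pos_on hwi _ hst₀
    intro x hx
    exact mul_pos hc₁ (Real.rpow_pos_of_pos (hvpos x (le_trans has hx.1.le)) _)
  have hdouble : (∫ x in s..t₀, 2 * w x) = 2 * ∫ x in s..t₀, w x :=
    intervalIntegral.integral_const_mul 2 w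
  -- fundamental theorem for z
  have hzi0t : ∀ b, b ∈ Set.Icc 0 T → IntervalIntegrable z' volume 0 b := by
    intro b hb
    rw [intervalIntegrable_iff_integrableOn_Icc_of_le hb.1]
    exact hint.mono_set (Set.Icc_subset_Icc le_rfl hb.2)
  have eqz : z t₀ - z s = ∫ u in s..t₀, z' u := by
    have e1 := hac t₀ ⟨le_trans ha0 hat₀le, ht₀T⟩
    have e2 := hac s ⟨le_trans ha0 has, le_trans hst₀le ht₀T⟩
    have e3 := intervalIntegral.integral_interval_sub_left
      (hzi0t t₀ ⟨le_trans ha0 hat₀le, ht₀T⟩)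
      (hzi0t s ⟨le_trans ha0 has, le_trans hst₀le ht₀T⟩)
    rw [e1, e2]
    rw [← e3]
    ring
  have hzsvs : z s < v s := hlt s ⟨has, hst₀⟩
  -- conclude the contradiction
  have final : z t₀ - z s ≤ ∫ x in s..t₀, w x := by
    rw [eqz]; exact le_trans ineq1 ineq2
  rw [heq] at final
  rw [hdouble] at hweq
  linarith

/-- Yudovich-type uniqueness ODE lemma: if `z ≥ 0` is absolutely continuous on
    `[0,T]` with `z(0) = 0` and for every `ε ∈ (0,1)` it satisfies
    `z z' ≤ (C/ε) M^ε z^{2-ε}` a.e., then `z ≡ 0` on `[0,T]`. -/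
theorem yudovich_ode_lemma (T C M : ℝ) (hT : 0 < T) (hC : 0 < C) (hM : 0 < M)
    (z z' : ℝ → ℝ)
    (hnn : ∀ t ∈ Set.Icc 0 T, 0 ≤ z t)
    (hz0 : z 0 = 0)
    (hint : IntegrableOn z' (Set.Icc 0 T))
    -- absolute continuity: z is the integral of z'
    (hac : ∀ t ∈ Set.Icc 0 T, z t = z 0 + ∫ s in (0 : ℝ)..t, z' s)
    -- the differential inequality, a.e. on [0,T], for every ε ∈ (0,1):
    (hineq : ∀ ε ∈ Set.Ioo (0 : ℝ) 1,
      ∀ᵐ t ∂(volume.restrict (Set.Icc 0 T)),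
        z t * z' t ≤ (C / ε) * M ^ ε * (z t) ^ ((2 : ℝ) - ε)) :
    ∀ t ∈ Set.Icc 0 T, z t = 0 := by
  -- one step: if z a = 0 and 2C(t-a) ≤ 1/2, then z t = 0
  have step : ∀ a ∈ Set.Icc (0:ℝ) T, z a = 0 →
      ∀ t ∈ Set.Icc a T, 2*C*(t-a) ≤ 1/2 → z t = 0 := by
    intro a ha hza t ht hhalf
    have htmem : t ∈ Set.Icc (0:ℝ) T := ⟨le_trans ha.1 ht.1, ht.2⟩
    have hCt : 0 ≤ 2*C*(t-a) := by
      have := ht.1; nlinarith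
    have key : ∀ n : ℕ, 2 ≤ n → z t ≤ M * (3/4:ℝ)^n := by
      intro n hn
      have hn0 : (0:ℝ) < n := by positivity
      have hε : (1/(n:ℝ)) ∈ Set.Ioo (0:ℝ) 1 := by
        constructor
        · positivity
        · rw [div_lt_one hn0]
          exact_mod_cast lt_of_lt_of_le one_lt_two hn
      have hδ : (0:ℝ) < 3/4 - 2*C*(t-a) := by linarith
      have hcomp := yudovich_comp T C M hC hM z z' hnn hint hac hineq
        a ha hza (1/(n:ℝ)) hε (3/4 - 2*C*(t-a)) hδ t ht
      have e1 : 2*C*(t-a) + (3/4 - 2*C*(t-a)) = (3/4:ℝ) := by ring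
      rw [e1] at hcomp
      have e2 : (1:ℝ)/(1/(n:ℝ)) = (n:ℝ) := by
        rw [one_div_one_div]
      rw [e2] at hcomp
      rw [Real.rpow_natCast] at hcomp
      exact hcomp.le
    have hlim : Filter.Tendsto (fun n : ℕ => M * (3/4:ℝ)^n) Filter.atTop (nhds 0) := by
      have := (tendsto_pow_atTop_nhds_zero_of_lt_one (by norm_num : (0:ℝ) ≤ 3/4)
        (by norm_num : (3/4:ℝ) < 1)).const_mul M
      simpa using this
    have hz_le : z t ≤ 0 :=
      ge_of_tendsto hlim (Filter.eventually_atTop.2 ⟨2, fun n hn => key n hn⟩)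
    exact le_antisymm hz_le (hnn t htmem)
  -- induction over intervals of length 1/(4C)
  have main : ∀ n : ℕ, ∀ t ∈ Set.Icc (0:ℝ) T, t ≤ (n:ℝ)/(4*C) → z t = 0 := by
    intro n
    induction n with
    | zero =>
      intro t ht h0
      have : t = 0 := le_antisymm (by simpa using h0) ht.1
      rw [this]; exact hz0
    | succ n ih =>
      intro t ht hle
      by_cases hcase : t ≤ (n:ℝ)/(4*C)
      · exact ih t ht hcase
      · push_neg at hcase
        set a := (n:ℝ)/(4*C) with ha_def
        have ha : a ∈ Set.Icc (0:ℝ) T := ⟨by positivity, le_trans hcase.le ht.2⟩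
        have hza : z a = 0 := ih a ha le_rfl
        apply step a ha hza t ⟨hcase.le, ht.2⟩
        have h1 : t - a ≤ 1/(4*C) := by
          have : ((n:ℝ)+1)/(4*C) - (n:ℝ)/(4*C) = 1/(4*C) := by ring
          push_cast at hle
          linarith
        calc 2*C*(t-a) ≤ 2*C*(1/(4*C)) := by
              apply mul_le_mul_of_nonneg_left h1 (by positivity)
          _ = 1/2 := by field_simp; ring
  intro t ht
  obtain ⟨n, hn⟩ := exists_nat_ge (T*(4*C))
  apply main n t ht
  calc t ≤ T := ht.2
    _ ≤ (n:ℝ)/(4*C) := by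
        rw [le_div_iff₀ (by positivity : (0:ℝ) < 4*C)]
        exact hn
end
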